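/- Let A, B be maximal monotone operators on a real Hilbert space H with S = {u : z ∈ (I+A+B)(u)} nonempty, z ∈ H, β ∈ (0,1), and (r_k) positive with r_{k+1} = r_k/√(1 + 2r_k(1−β)/β). Let (x_k), (y_k), (z_k) satisfy x_{k+1} = J_{r_k(A_z)^{(β)}}(z_k + r_k y_k), y_{k+1} = (1/r_k)(z_k + r_k y_k − x_{k+1}), z_{k+1} = J_{r_{k+1}(B_z)^{(β)}}(x_{k+1} − r_{k+1} y_{k+1}). Let r > 0, u a fixed point of (2J_{r(B_z)^{(β)}} − I) ∘ (2J_{r(A_z)^{(β)}} − I), v = J_{r(A_z)^{(β)}}(u), and v_A = (1/r)(u − v). Then for all k: (1/r_{k+1}²)‖x_{k+1} − v‖² + ‖y_{k+1} − v_A‖² ≤ (1/r_k²)‖x_k − v‖² + ‖y_k − v_A‖². -/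

import Mathlib

open scoped RealInnerProductSpace

variable {H : Type*} [NormedAddCommGroup H] [InnerProductSpace ℝ H] [CompleteSpace H]

/-- A set-valued operator is monotone. -/
def MonotoneOp (A : H → Set H) : Prop :=
  ∀ ⦃x y x' y' : H⦄, x' ∈ A x → y' ∈ A y → 0 ≤ ⟪x - y, x' - y'⟫

/-- A set-valued operator is σ-strongly monotone. -/
def StronglyMonotoneOp (σ : ℝ) (A : H → Set H) : Prop :=
  ∀ ⦃x y x' y' : H⦄, x' ∈ A x → y' ∈ A y → σ * ‖x - y‖ ^ 2 ≤ ⟪x - y, x' - y'⟫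

/-- A set-valued operator is maximal monotone. -/
def MaximalMonotoneOp (A : H → Set H) : Prop :=
  MonotoneOp A ∧ ∀ x x' : H, (∀ y y' : H, y' ∈ A y → 0 ≤ ⟪x - y, x' - y'⟫) → x' ∈ A x

/-- The operator `(A_z)^{(β)} : x ↦ 2(1-β)·A((1/β)x + z) + ((1-β)/β)x`. -/
def pert (A : H → Set H) (z : H) (β : ℝ) : H → Set H :=
  fun x => (fun u => (2 * (1 - β)) • u + ((1 - β) / β) • x) '' A (β⁻¹ • x + z)

/-!
With `σ = (1-β)/β`, the operator `(A_z)^{(β)}` is `σ`-strongly monotone and `(B_z)^{(β)}` is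
monotone. The fixed point `u` gives `v_A ∈ (A_z)^{(β)}(v)` and `-v_A ∈ (B_z)^{(β)}(v)`. Measured
from `(v, v_A)`, the forward half-step gains the factor `1 + 2 r_k σ` by strong monotonicity of
`(A_z)^{(β)}`, the backward half-step loses nothing by monotonicity of `(B_z)^{(β)}`, and the
step-size rule `r_{k+1}⁻² = (1 + 2 r_k σ) / r_k²` turns that gain into the weight `1/r_{k+1}²`.
-/

section Resolvent

variable {K V : Type*} [Field K] [AddCommGroup V] [Module K V]

theorem resolvent_residual_mem {M : V → Set V} {J : V → V} {ρ : K} (hρ : ρ ≠ 0)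
    (hJ : ∀ q, ∃ m ∈ M (J q), q = J q + ρ • m) (q : V) : ρ⁻¹ • (q - J q) ∈ M (J q) := by
  obtain ⟨m, hm, hq⟩ := hJ q
  have hsub : q - J q = ρ • m := sub_eq_of_eq_add' hq
  rwa [hsub, inv_smul_smul₀ hρ]

theorem neg_resolvent_residual_mem_of_reflected_comp_fixed [CharZero K] {N : V → Set V}
    {JM JN : V → V} {ρ : K} (hρ : ρ ≠ 0) (hJN : ∀ q, ∃ m ∈ N (JN q), q = JN q + ρ • m) {u : V}
    (hu : (2:K) • JN ((2:K) • JM u - u) - ((2:K) • JM u - u) = u) :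
    -(ρ⁻¹ • (u - JM u)) ∈ N (JM u) := by
  have hJN_eq : JN ((2:K) • JM u - u) = JM u := by
    refine smul_right_injective V (two_ne_zero : (2:K) ≠ 0) ?_
    linear_combination (norm := module) hu
  have hmem := resolvent_residual_mem hρ hJN ((2:K) • JM u - u)
  rw [hJN_eq] at hmem
  convert hmem using 1
  module

end Resolvent

section InnerProductSpace

variable {E : Type*} [NormedAddCommGroup E] [InnerProductSpace ℝ E]

theorem StronglyMonotoneOp.monotoneOp {σ : ℝ} {M : E → Set E} (hM : StronglyMonotoneOp σ M)
    (hσ : 0 ≤ σ) : MonotoneOp M := fun _ _ _ _ hx hy =>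
  (mul_nonneg hσ (sq_nonneg _)).trans (hM hx hy)

theorem MonotoneOp.stronglyMonotoneOp_pert {A : E → Set E} (hA : MonotoneOp A) (z : E) {β : ℝ}
    (hβ0 : 0 < β) (hβ1 : β ≤ 1) : StronglyMonotoneOp ((1 - β) / β) (pert A z β) := by
  rintro x y _ _ ⟨a, ha, rfl⟩ ⟨b, hb, rfl⟩
  have hxy : x - y = β • ((β⁻¹ • x + z) - (β⁻¹ • y + z)) := by
    rw [add_sub_add_right_eq_sub, ← smul_sub, smul_inv_smul₀ hβ0.ne']
  have hdiff : ((2 * (1 - β)) • a + ((1 - β) / β) • x) - ((2 * (1 - β)) • b + ((1 - β) / β) • y)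
      = (2 * (1 - β)) • (a - b) + ((1 - β) / β) • (x - y) := by module
  have hab : 0 ≤ ⟪x - y, a - b⟫ := by
    rw [hxy, real_inner_smul_left]
    exact mul_nonneg hβ0.le (hA ha hb)
  rw [hdiff, inner_add_right, real_inner_smul_right, real_inner_smul_right,
    real_inner_self_eq_norm_sq]
  nlinarith [mul_nonneg (by linarith : (0:ℝ) ≤ 2 * (1 - β)) hab]

theorem le_norm_add_smul_sq_of_le_inner {σ r : ℝ} (hr : 0 ≤ r) {a b : E}
    (hab : σ * ‖a‖ ^ 2 ≤ ⟪a, b⟫) :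
    (1 + 2 * r * σ) * ‖a‖ ^ 2 + r ^ 2 * ‖b‖ ^ 2 ≤ ‖a + r • b‖ ^ 2 := by
  rw [norm_add_sq_real, real_inner_smul_right, norm_smul, mul_pow, Real.norm_eq_abs, sq_abs]
  nlinarith [mul_le_mul_of_nonneg_left hab hr]

theorem norm_add_smul_sq_le_of_inner_nonneg {r : ℝ} {c d e : E} (h : 0 ≤ ⟪c, e - c - r • d⟫) :
    ‖c + r • d‖ ^ 2 ≤ ‖e‖ ^ 2 + r ^ 2 * ‖d‖ ^ 2 := by
  have hid : ‖e‖ ^ 2 + r ^ 2 * ‖d‖ ^ 2 =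
      ‖c + r • d‖ ^ 2 + 2 * ⟪c, e - c - r • d⟫ + ‖e - c‖ ^ 2 := by
    simp only [← real_inner_self_eq_norm_sq, inner_add_left, inner_add_right, inner_sub_left,
      inner_sub_right, real_inner_smul_left, real_inner_smul_right]
    rw [real_inner_comm c d, real_inner_comm c e]
    ring
  nlinarith [sq_nonneg ‖e - c‖]

theorem splitting_step_norm_sq_le {M N : E → Set E} {σ r : ℝ} (hM : StronglyMonotoneOp σ M)
    (hN : MonotoneOp N) (hr : 0 ≤ r) {v vA : E} (hvM : vA ∈ M v) (hvN : -vA ∈ N v)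
    {x y w x' y' m : E} (hy' : y' ∈ M x') (hx' : w + r • y = x' + r • y') (hm : m ∈ N w)
    (hw : x - r • y = w + r • m) :
    (1 + 2 * r * σ) * ‖x' - v‖ ^ 2 + r ^ 2 * ‖y' - vA‖ ^ 2 ≤
      ‖x - v‖ ^ 2 + r ^ 2 * ‖y - vA‖ ^ 2 := by
  have hback : 0 ≤ ⟪w - v, (x - v) - (w - v) - r • (y - vA)⟫ := by
    have hres : (x - v) - (w - v) - r • (y - vA) = r • (m - -vA) := by
      linear_combination (norm := module) hw
    rw [hres, real_inner_smul_right]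
    exact mul_nonneg hr (hN hm hvN)
  calc (1 + 2 * r * σ) * ‖x' - v‖ ^ 2 + r ^ 2 * ‖y' - vA‖ ^ 2
      ≤ ‖(x' - v) + r • (y' - vA)‖ ^ 2 := le_norm_add_smul_sq_of_le_inner hr (hM hy' hvM)
    _ = ‖(w - v) + r • (y - vA)‖ ^ 2 := by
      congr 2
      linear_combination (norm := module) -hx'
    _ ≤ ‖x - v‖ ^ 2 + r ^ 2 * ‖y - vA‖ ^ 2 := norm_add_smul_sq_le_of_inner_nonneg hback

end InnerProductSpace

theorem stmt12_general (A B : H → Set H) (hA : MaximalMonotoneOp A) (hB : MaximalMonotoneOp B)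
    (z : H) (β : ℝ) (hβ : β ∈ Set.Ioo (0:ℝ) 1)
    (r : ℕ → ℝ) (hrpos : ∀ k, 0 < r k)
    (hrec : ∀ k, r (k + 1) = r k / Real.sqrt (1 + 2 * r k * (1 - β) / β))
    (x y w : ℕ → H)
    (hx : ∀ k, ∃ m ∈ pert A z β (x (k + 1)), w k + r k • y k = x (k + 1) + r k • m)
    (hy : ∀ k, y (k + 1) = (r k)⁻¹ • (w k + r k • y k - x (k + 1)))
    (hw : ∀ k, ∃ m ∈ pert B z β (w k), x k - r k • y k = w k + r k • m)
    (ρ : ℝ) (hρ : 0 < ρ) (JA JB : H → H)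
    (hJA : ∀ q : H, ∃ m ∈ pert A z β (JA q), q = JA q + ρ • m)
    (hJB : ∀ q : H, ∃ m ∈ pert B z β (JB q), q = JB q + ρ • m)
    (u : H) (hu : (2:ℝ) • JB ((2:ℝ) • JA u - u) - ((2:ℝ) • JA u - u) = u)
    (v vA : H) (hv : v = JA u) (hvA : vA = ρ⁻¹ • (u - v)) :
    ∀ k, ((r (k + 1))⁻¹) ^ 2 * ‖x (k + 1) - v‖ ^ 2 + ‖y (k + 1) - vA‖ ^ 2 ≤
      ((r k)⁻¹) ^ 2 * ‖x k - v‖ ^ 2 + ‖y k - vA‖ ^ 2 := by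
  intro k
  obtain ⟨hβ0, hβ1⟩ := hβ
  have hσ : 0 ≤ (1 - β) / β := div_nonneg (by linarith) hβ0.le
  have hAβ := hA.1.stronglyMonotoneOp_pert z hβ0 hβ1.le
  have hBβ := (hB.1.stronglyMonotoneOp_pert z hβ0 hβ1.le).monotoneOp hσ
  have hvA_mem : vA ∈ pert A z β v := hvA ▸ hv ▸ resolvent_residual_mem hρ.ne' hJA u
  have hvB_mem : -vA ∈ pert B z β v :=
    hvA ▸ hv ▸ neg_resolvent_residual_mem_of_reflected_comp_fixed hρ.ne' hJB hu
  obtain ⟨mA, hmA, hxk⟩ := hx k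
  obtain ⟨mB, hmB, hwk⟩ := hw k
  have hyk : y (k + 1) = mA := by
    rw [hy k, hxk, add_sub_cancel_left, inv_smul_smul₀ (hrpos k).ne']
  subst hyk
  have hstep := splitting_step_norm_sq_le hAβ hBβ (hrpos k).le hvA_mem hvB_mem hmA hxk hmB hwk
  have hgain : 0 < 1 + 2 * r k * (1 - β) / β := by
    have := hrpos k
    positivity
  have hweight : ((r (k + 1))⁻¹) ^ 2 = (1 + 2 * r k * ((1 - β) / β)) / r k ^ 2 := by
    rw [hrec k, inv_div, div_pow, Real.sq_sqrt hgain.le, mul_div_assoc]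
  have hr2 : 0 < r k ^ 2 := pow_pos (hrpos k) 2
  rw [hweight, inv_pow, ← div_eq_inv_mul, div_mul_eq_mul_div, div_add' _ _ _ hr2.ne',
    div_add' _ _ _ hr2.ne', div_le_div_iff_of_pos_right hr2]
  linarith

theorem stmt12 (A B : H → Set H) (hA : MaximalMonotoneOp A) (hB : MaximalMonotoneOp B)
    (z : H) (β : ℝ) (hβ : β ∈ Set.Ioo (0:ℝ) 1)
    (hS : {u : H | ∃ a ∈ A u, ∃ b ∈ B u, z = u + a + b}.Nonempty)
    (r : ℕ → ℝ) (hrpos : ∀ k, 0 < r k)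
    (hrec : ∀ k, r (k + 1) = r k / Real.sqrt (1 + 2 * r k * (1 - β) / β))
    (x y w : ℕ → H)
    (hx : ∀ k, ∃ m ∈ pert A z β (x (k + 1)), w k + r k • y k = x (k + 1) + r k • m)
    (hy : ∀ k, y (k + 1) = (r k)⁻¹ • (w k + r k • y k - x (k + 1)))
    (hw : ∀ k, ∃ m ∈ pert B z β (w k), x k - r k • y k = w k + r k • m)
    (ρ : ℝ) (hρ : 0 < ρ) (JA JB : H → H)
    (hJA : ∀ q : H, ∃ m ∈ pert A z β (JA q), q = JA q + ρ • m)
    (hJB : ∀ q : H, ∃ m ∈ pert B z β (JB q), q = JB q + ρ • m)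
    (u : H) (hu : (2:ℝ) • JB ((2:ℝ) • JA u - u) - ((2:ℝ) • JA u - u) = u)
    (v vA : H) (hv : v = JA u) (hvA : vA = ρ⁻¹ • (u - v)) :
    ∀ k, ((r (k + 1))⁻¹) ^ 2 * ‖x (k + 1) - v‖ ^ 2 + ‖y (k + 1) - vA‖ ^ 2 ≤
      ((r k)⁻¹) ^ 2 * ‖x k - v‖ ^ 2 + ‖y k - vA‖ ^ 2 :=
  stmt12_general A B hA hB z β hβ r hrpos hrec x y w hx hy hw ρ hρ JA JB hJA hJB u hu v vA hv hvA
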